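/- arXiv:1903.05311 — 2 statements merged into one kernel-verified Lean document; each statement's English description precedes it below -/
import Mathlib

section
/- Let x : ℝ → ℝⁿ solve x'(t) = f(t, x(t)) on [0,T], let μ be the occupation measure of the trajectory on [0,T] × ℝⁿ, let μ_T = δ_{x(T)} and μ_0 = δ_{x(0)} be Dirac measures. Then for every C¹ function v : ℝ × ℝⁿ → ℝ, ∫ v(T, y) dμ_T(y) = ∫ v(0, y) dμ_0(y) + ∫ (∂v/∂t + ∇ₓv · f)(t, y) dμ(t, y). That is, (δ_T ⊗ μ_T) = (δ_0 ⊗ μ_0) + L*μ holds weakly against C¹ test functions. -/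
open MeasureTheory

/-- Weak Liouville equation for a single trajectory: testing against any `C¹` function `v`,
`∫ v(T,·) dμ_T = ∫ v(0,·) dμ₀ + ∫ Lv dμ`, where `μ` is the occupation measure and
`μ_T = δ_{x(T)}`, `μ₀ = δ_{x(0)}`. -/
theorem weak_liouville_single_trajectory (n : ℕ) (T : ℝ) (hT : 0 < T)
    (f : ℝ × EuclideanSpace ℝ (Fin n) → EuclideanSpace ℝ (Fin n)) (hf : Continuous f)
    (x : ℝ → EuclideanSpace ℝ (Fin n))
    (hx : ∀ t ∈ Set.Icc (0:ℝ) T, HasDerivAt x (f (t, x t)) t)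
    (v : ℝ × EuclideanSpace ℝ (Fin n) → ℝ) (hv : ContDiff ℝ 1 v) :
    (∫ y, v (T, y) ∂(Measure.dirac (x T)))
      = (∫ y, v (0, y) ∂(Measure.dirac (x 0)))
        + ∫ p, fderiv ℝ v p (1, f p)
            ∂(Measure.map (fun t => (t, x t)) (volume.restrict (Set.Icc 0 T))) := by
  have hxc : ContinuousOn x (Set.Icc 0 T) := fun t ht =>
    (hx t ht).continuousAt.continuousWithinAt
  have hmapc : ContinuousOn (fun t => (t, x t)) (Set.Icc 0 T) :=
    continuousOn_id.prodMk hxc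
  have hmeas : AEMeasurable (fun t => (t, x t)) (volume.restrict (Set.Icc 0 T)) :=
    (hmapc.aemeasurable measurableSet_Icc)
  set g' : ℝ → ℝ := fun t => fderiv ℝ v (t, x t) (1, f (t, x t)) with hg'
  have hderiv : ∀ t ∈ Set.Icc (0:ℝ) T, HasDerivAt (fun t => v (t, x t)) (g' t) t := by
    intro t ht
    have h1 : HasDerivAt (fun t => (t, x t)) (1, f (t, x t)) t :=
      (hasDerivAt_id t).prodMk (hx t ht)
    have h2 : HasFDerivAt v (fderiv ℝ v (t, x t)) (t, x t) :=
      (hv.differentiable one_ne_zero (t, x t)).hasFDerivAt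
    exact h2.comp_hasDerivAt t h1
  have hfdc : Continuous fun p => fderiv ℝ v p (1, f p) := by
    have : Continuous (fderiv ℝ v) := hv.continuous_fderiv one_ne_zero
    exact this.clm_apply (continuous_const.prodMk hf)
  have hg'c : ContinuousOn g' (Set.Icc 0 T) :=
    (hfdc.comp_continuousOn hmapc)
  have hint : IntervalIntegrable g' volume 0 T := by
    apply ContinuousOn.intervalIntegrable
    rwa [Set.uIcc_of_le hT.le]
  have key : ∫ t in (0:ℝ)..T, g' t = v (T, x T) - v (0, x 0) :=
    intervalIntegral.integral_eq_sub_of_hasDerivAt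
      (fun t ht => hderiv t (by rwa [Set.uIcc_of_le hT.le] at ht)) hint
  have hmap : (∫ p, fderiv ℝ v p (1, f p)
      ∂(Measure.map (fun t => (t, x t)) (volume.restrict (Set.Icc 0 T))))
      = ∫ t in Set.Icc (0:ℝ) T, g' t := by
    rw [integral_map hmeas hfdc.aestronglyMeasurable]
  rw [integral_dirac, integral_dirac, hmap, MeasureTheory.integral_Icc_eq_integral_Ioc,
    ← intervalIntegral.integral_of_le hT.le, key]
  ring
end

section
/- Let x : ℝ → ℝⁿ be the solution of x' = f(t,x) on [0,T] with x(0) = x₀, and suppose (v, w) is feasible for the dual program D (v ∈ C¹, w continuous, w ≥ 1 on [0,T] × X_u, −Lv ≥ w on [0,T] × X, v(T,·) ≥ 0 on X, w ≥ 0 on [0,T] × X), where the trajectory remains in the compact set X for all t ∈ [0,T]. Then the time spent in the unsafe set satisfies ∫₀ᵀ 1_{X_u}(x(t)) dt ≤ v(0, x₀). -/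
open MeasureTheory

/-- Single-trajectory weak duality (`g ≡ 1`): any dual-feasible pair `(v, w)` bounds the
time the trajectory spends in the unsafe region: `∫₀ᵀ 1_{X_u}(x(t)) dt ≤ v(0, x₀)`. -/
theorem dual_feasible_bounds_unsafe_time (n : ℕ) (T : ℝ) (hT : 0 < T)
    (X Xu : Set (EuclideanSpace ℝ (Fin n))) (hXuX : Xu ⊆ X) (hXc : IsCompact X)
    (hXu : MeasurableSet Xu)
    (f : ℝ × EuclideanSpace ℝ (Fin n) → EuclideanSpace ℝ (Fin n)) (hf : Continuous f)
    (x : ℝ → EuclideanSpace ℝ (Fin n))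
    (hx : ∀ t ∈ Set.Icc (0:ℝ) T, HasDerivAt x (f (t, x t)) t)
    (hmem : ∀ t ∈ Set.Icc (0:ℝ) T, x t ∈ X)
    (v : ℝ × EuclideanSpace ℝ (Fin n) → ℝ) (hv : ContDiff ℝ 1 v)
    (w : ℝ × EuclideanSpace ℝ (Fin n) → ℝ) (hw : Continuous w)
    (hw1 : ∀ t ∈ Set.Icc (0:ℝ) T, ∀ y ∈ Xu, (1:ℝ) ≤ w (t, y))
    (hLv : ∀ t ∈ Set.Icc (0:ℝ) T, ∀ y ∈ X,
      w (t, y) ≤ -(fderiv ℝ v (t, y) (1, f (t, y))))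
    (hvT : ∀ y ∈ X, 0 ≤ v (T, y))
    (hw0 : ∀ t ∈ Set.Icc (0:ℝ) T, ∀ y ∈ X, 0 ≤ w (t, y)) :
    (∫ t in (0:ℝ)..T, Set.indicator Xu (fun _ => (1:ℝ)) (x t)) ≤ v (0, x 0) := by
  set φ : ℝ → ℝ := fun t => v (t, x t) with hφ
  have hxc : ContinuousOn x (Set.Icc 0 T) := fun t ht =>
    ((hx t ht).continuousAt).continuousWithinAt
  set g : ℝ → ℝ := fun t => fderiv ℝ v (t, x t) (1, f (t, x t)) with hg
  have hderiv : ∀ t ∈ Set.Icc (0:ℝ) T, HasDerivAt φ (g t) t := by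
    intro t ht
    have h1 : HasDerivAt (fun s : ℝ => (s, x s)) ((1 : ℝ), f (t, x t)) t :=
      (hasDerivAt_id t).prodMk (hx t ht)
    have h2 : HasFDerivAt v (fderiv ℝ v (t, x t)) (t, x t) :=
      (hv.differentiable one_ne_zero (t, x t)).hasFDerivAt
    exact h2.comp_hasDerivAt t h1
  have hcurve : ContinuousOn (fun t : ℝ => (t, x t)) (Set.Icc 0 T) :=
    continuousOn_id.prodMk hxc
  have hgc : ContinuousOn g (Set.Icc 0 T) := by
    apply ContinuousOn.clm_apply
    · exact (hv.continuous_fderiv one_ne_zero).comp_continuousOn hcurve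
    · exact continuousOn_const.prodMk (hf.comp_continuousOn hcurve)
  have hgint : IntervalIntegrable g volume 0 T := by
    apply ContinuousOn.intervalIntegrable
    rwa [Set.uIcc_of_le hT.le]
  have hwc : ContinuousOn (fun t => w (t, x t)) (Set.Icc 0 T) :=
    hw.comp_continuousOn hcurve
  have hwint : IntervalIntegrable (fun t => w (t, x t)) volume 0 T := by
    apply ContinuousOn.intervalIntegrable
    rwa [Set.uIcc_of_le hT.le]
  -- FTC
  have hftc : ∫ t in (0:ℝ)..T, g t = φ T - φ 0 :=
    intervalIntegral.integral_eq_sub_of_hasDerivAt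
      (fun t ht => hderiv t (by rwa [Set.uIcc_of_le hT.le] at ht)) hgint
  -- integrability of the indicator
  have hxm : AEMeasurable x (volume.restrict (Set.Icc (0:ℝ) T)) :=
    (hxc.aemeasurable measurableSet_Icc)
  have hindm : AEStronglyMeasurable (fun t => Set.indicator Xu (fun _ => (1:ℝ)) (x t))
      (volume.restrict (Set.Icc (0:ℝ) T)) :=
    ((measurable_const.indicator hXu).comp_aemeasurable hxm).aestronglyMeasurable
  have hindint : IntervalIntegrable (fun t => Set.indicator Xu (fun _ => (1:ℝ)) (x t))
      volume 0 T := by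
    rw [intervalIntegrable_iff]
    have : IntegrableOn (fun t => Set.indicator Xu (fun _ => (1:ℝ)) (x t))
        (Set.Icc (0:ℝ) T) volume := by
      apply Integrable.mono' (integrable_const (1:ℝ)) hindm
      filter_upwards with t
      by_cases h : x t ∈ Xu <;> simp [Set.indicator_apply, h]
    rw [Set.uIoc_of_le hT.le]
    exact this.mono_set Set.Ioc_subset_Icc_self
  -- pointwise bounds
  have h1 : (∫ t in (0:ℝ)..T, Set.indicator Xu (fun _ => (1:ℝ)) (x t)) ≤
      ∫ t in (0:ℝ)..T, w (t, x t) := by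
    apply intervalIntegral.integral_mono_on hT.le hindint hwint
    intro t ht
    by_cases h : x t ∈ Xu
    · simpa [Set.indicator_of_mem h] using hw1 t ht _ h
    · simpa [Set.indicator_of_notMem h] using hw0 t ht _ (hmem t ht)
  have h2 : (∫ t in (0:ℝ)..T, w (t, x t)) ≤ ∫ t in (0:ℝ)..T, -g t := by
    apply intervalIntegral.integral_mono_on hT.le hwint hgint.neg
    intro t ht
    exact hLv t ht _ (hmem t ht)
  have h3 : (∫ t in (0:ℝ)..T, -g t) = φ 0 - φ T := by
    rw [intervalIntegral.integral_neg, hftc]; ring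
  have hφT : 0 ≤ φ T := hvT _ (hmem T (Set.right_mem_Icc.mpr hT.le))
  have := h1.trans (h2.trans_eq h3)
  calc (∫ t in (0:ℝ)..T, Set.indicator Xu (fun _ => (1:ℝ)) (x t)) ≤ φ 0 - φ T := this
    _ ≤ φ 0 := by linarith
end
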